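/- arXiv:1201.2482 — 3 statements merged into one kernel-verified Lean document; each statement's English description precedes it below -/
import Mathlib

section
/- Let M be the complex vector space with basis {m_s} indexed by subsets s of {1,...,n}, with the planar rook monoid P_n acting by d · m_s = m_{d(s)} if s ⊆ dom(d) and d · m_s = 0 otherwise. Then for each ℓ, the subspace M_ℓ spanned by {m_s : |s| = ℓ} is an irreducible ℂP_n-submodule: every nonzero submodule of M_ℓ equals M_ℓ. -/
/-- A planar rook diagram on `n` vertices: a pair of equal-size subsets of `Fin n`
(the domain and range), which determines a unique order-preserving bijection. -/
structure PlanarRook (n : ℕ) where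
  dom : Finset (Fin n)
  ran : Finset (Fin n)
  hcard : dom.card = ran.card

/-- The image of an element of the domain under the unique order-preserving
bijection `dom → ran` determined by the diagram. -/
noncomputable def PlanarRook.mapElem {n : ℕ} (d : PlanarRook n) (x : Fin n)
    (hx : x ∈ d.dom) : Fin n :=
  ((d.ran.orderIsoOfFin d.hcard.symm) ((d.dom.orderIsoOfFin rfl).symm ⟨x, hx⟩) : Fin n)

/-- The image of a subset under a planar rook diagram. -/
noncomputable def PlanarRook.applySet {n : ℕ} (d : PlanarRook n)
    (s : Finset (Fin n)) : Finset (Fin n) :=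
  (d.dom.attach.filter (fun x => x.1 ∈ s)).image (fun x => d.mapElem x.1 x.2)

/-- The basis vector `m_s` of the module `M`. -/
noncomputable def mvec {n : ℕ} (s : Finset (Fin n)) : Finset (Fin n) → ℂ :=
  fun t => if t = s then 1 else 0

/-- The action of a planar rook diagram on the module `M` with basis `m_s`:
`d · m_s = m_{d(s)}` if `s ⊆ dom d`, else `0`, extended linearly. -/
noncomputable def rookAct {n : ℕ} (d : PlanarRook n) (f : Finset (Fin n) → ℂ) :
    Finset (Fin n) → ℂ :=
  fun t => ∑ s ∈ Finset.univ.filter (fun s => s ⊆ d.dom ∧ d.applySet s = t), f s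

lemma supp_lemma {n ℓ : ℕ} {f : Finset (Fin n) → ℂ}
    (hf : f ∈ Submodule.span ℂ {f | ∃ s : Finset (Fin n), s.card = ℓ ∧ f = mvec s})
    {t : Finset (Fin n)} (ht : t.card ≠ ℓ) : f t = 0 := by
  induction hf using Submodule.span_induction with
  | mem g hg =>
    obtain ⟨s, hs, rfl⟩ := hg
    simp only [mvec, ite_eq_right_iff]
    rintro rfl; exact absurd hs ht
  | zero => rfl
  | add _ _ _ _ h1 h2 => simp [Pi.add_apply, h1, h2]
  | smul c _ _ h => simp [Pi.smul_apply, h]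

lemma applySet_id {n : ℕ} (s₀ s : Finset (Fin n)) (hs : s ⊆ s₀) :
    (PlanarRook.mk s₀ s₀ rfl).applySet s = s := by
  ext y
  simp only [PlanarRook.applySet, PlanarRook.mapElem, Finset.mem_image, Finset.mem_filter,
    Finset.mem_attach, true_and, Subtype.exists]
  constructor
  · rintro ⟨x, hx, hxs, rfl⟩
    simpa using hxs
  · intro hy
    exact ⟨y, hs hy, hy, by simp⟩

lemma applySet_dom {n : ℕ} (d : PlanarRook n) : d.applySet d.dom = d.ran := by
  ext y
  simp only [PlanarRook.applySet, PlanarRook.mapElem, Finset.mem_image, Finset.mem_filter,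
    Finset.mem_attach, true_and, Subtype.exists]
  constructor
  · rintro ⟨x, hx, _, rfl⟩
    exact Finset.coe_mem _
  · intro hy
    refine ⟨((d.dom.orderIsoOfFin rfl) ((d.ran.orderIsoOfFin d.hcard.symm).symm ⟨y, hy⟩) : Fin n),
      Finset.coe_mem _, Finset.coe_mem _, ?_⟩
    simp [← Finset.coe_orderIsoOfFin_apply, Subtype.coe_eta]

lemma rookAct_id {n ℓ : ℕ} {f : Finset (Fin n) → ℂ}
    (hf : f ∈ Submodule.span ℂ {f | ∃ s : Finset (Fin n), s.card = ℓ ∧ f = mvec s})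
    {s₀ : Finset (Fin n)} (hs₀ : s₀.card = ℓ) :
    rookAct ⟨s₀, s₀, rfl⟩ f = f s₀ • mvec s₀ := by
  funext t
  have hfilter : Finset.univ.filter
      (fun s => s ⊆ s₀ ∧ (PlanarRook.mk s₀ s₀ rfl).applySet s = t)
      = if t ⊆ s₀ then {t} else ∅ := by
    ext s
    simp only [Finset.mem_filter, Finset.mem_univ, true_and]
    constructor
    · rintro ⟨h1, h2⟩
      rw [applySet_id _ _ h1] at h2
      subst h2
      simp [h1]
    · intro hs
      split at hs
      · rw [Finset.mem_singleton] at hs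
        subst hs
        exact ⟨‹_›, applySet_id _ _ ‹_›⟩
      · simp at hs
  show (∑ s ∈ Finset.univ.filter _, f s) = _
  rw [hfilter]
  simp only [Pi.smul_apply, mvec, smul_eq_mul]
  split
  · rw [Finset.sum_singleton]
    by_cases h : t = s₀
    · subst h; simp
    · rw [if_neg h, mul_zero]
      by_cases hc : t.card = ℓ
      · exact absurd (Finset.eq_of_subset_of_card_le ‹t ⊆ s₀› (by rw [hs₀, hc])) h
      · exact supp_lemma hf hc
  · rw [Finset.sum_empty]
    rw [if_neg (fun h => by subst h; simp_all), mul_zero]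

lemma rookAct_mvec_dom {n : ℕ} (d : PlanarRook n) :
    rookAct d (mvec d.dom) = mvec d.ran := by
  funext t
  show (∑ s ∈ Finset.univ.filter _, (if s = d.dom then (1:ℂ) else 0)) = _
  rw [Finset.sum_ite_eq' _ d.dom (fun _ => (1:ℂ))]
  simp only [Finset.mem_filter, Finset.mem_univ, true_and, subset_refl, applySet_dom,
    mvec]
  by_cases h : d.ran = t
  · simp [h]
  · rw [if_neg h, if_neg (fun hh : t = d.ran => h hh.symm)]

/-- Each `M_ℓ = span{m_s : |s| = ℓ}` is an irreducible `ℂP_n`-submodule of `M`: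
every nonzero submodule of `M_ℓ` invariant under the planar rook monoid action
equals `M_ℓ`. -/
theorem Mell_irreducible (n ℓ : ℕ) (N : Submodule ℂ (Finset (Fin n) → ℂ))
    (hle : N ≤ Submodule.span ℂ {f | ∃ s : Finset (Fin n), s.card = ℓ ∧ f = mvec s})
    (hinv : ∀ d : PlanarRook n, ∀ f ∈ N, rookAct d f ∈ N)
    (hne : N ≠ ⊥) :
    N = Submodule.span ℂ {f | ∃ s : Finset (Fin n), s.card = ℓ ∧ f = mvec s} := by
  refine le_antisymm hle ?_
  obtain ⟨f, hfN, hf0⟩ : ∃ f ∈ N, f ≠ 0 := by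
    by_contra h
    push_neg at h
    exact hne ((Submodule.eq_bot_iff N).2 h)
  obtain ⟨s₀, hs₀⟩ : ∃ s₀, f s₀ ≠ 0 := by
    by_contra h
    push_neg at h
    exact hf0 (funext h)
  have hcard : s₀.card = ℓ := by
    by_contra hc
    exact hs₀ (supp_lemma (hle hfN) hc)
  have hm : mvec s₀ ∈ N := by
    have h1 := hinv ⟨s₀, s₀, rfl⟩ f hfN
    rw [rookAct_id (hle hfN) hcard] at h1
    have h2 := N.smul_mem (f s₀)⁻¹ h1
    rwa [smul_smul, inv_mul_cancel₀ hs₀, one_smul] at h2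
  rw [Submodule.span_le]
  rintro g ⟨t, htc, rfl⟩
  have h2 := hinv ⟨s₀, t, by rw [hcard, htc]⟩ (mvec s₀) hm
  rwa [show mvec s₀ = mvec (PlanarRook.mk s₀ t (by rw [hcard, htc])).dom from rfl,
    rookAct_mvec_dom] at h2
end

section
/- The vectors {v_s, f·v_s : s ⊆ {1,...,k-1}} form a basis of V^{⊗k}, where v_s = e·(y⊗u_s) = x⊗u_s − y⊗(e·u_s). In particular, the sum of the 2-dimensional subspaces V_s = span{v_s, f·v_s} over all 2^{k-1} subsets s is direct and equals V^{⊗k}. -/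
noncomputable section

/-- `V^{⊗k}` for the two-dimensional module `V = ℂx ⊕ ℂy`, realized as functions on
words `w : Fin k → Bool` (`false` = `x` (even), `true` = `y` (odd)). -/
abbrev TensorV (k : ℕ) : Type := (Fin k → Bool) → ℂ

/-- The sign `(-1)^{#odd factors strictly before position i}` in the graded Leibniz rule. -/
def glSgn {k : ℕ} (w : Fin k → Bool) (i : Fin k) : ℂ :=
  (-1 : ℂ) ^ (Finset.univ.filter (fun j => j < i ∧ w j = true)).card

/-- The action of `e ∈ gl(1|1)` on `V^{⊗k}` (graded Leibniz rule, `e·y = x`, `e·x = 0`). -/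
def Eop (k : ℕ) : TensorV k →ₗ[ℂ] TensorV k :=
  LinearMap.pi fun w =>
    ∑ i ∈ Finset.univ.filter (fun i => w i = false),
      glSgn w i • LinearMap.proj (R := ℂ) (φ := fun _ => ℂ) (Function.update w i true)

/-- The action of `f ∈ gl(1|1)` on `V^{⊗k}` (graded Leibniz rule, `f·x = y`, `f·y = 0`). -/
def Fop (k : ℕ) : TensorV k →ₗ[ℂ] TensorV k :=
  LinearMap.pi fun w =>
    ∑ i ∈ Finset.univ.filter (fun i => w i = true),
      glSgn w i • LinearMap.proj (R := ℂ) (φ := fun _ => ℂ) (Function.update w i false)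

/-- The action of `h₁ ∈ gl(1|1)` on `V^{⊗k}`: a word is scaled by its number of `x`'s. -/
def H1op (k : ℕ) : TensorV k →ₗ[ℂ] TensorV k :=
  LinearMap.pi fun w =>
    ((Finset.univ.filter (fun i => w i = false)).card : ℂ) •
      LinearMap.proj (R := ℂ) (φ := fun _ => ℂ) w

/-- The action of `h₂ ∈ gl(1|1)` on `V^{⊗k}`: a word is scaled by its number of `y`'s. -/
def H2op (k : ℕ) : TensorV k →ₗ[ℂ] TensorV k :=
  LinearMap.pi fun w =>
    ((Finset.univ.filter (fun i => w i = true)).card : ℂ) •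
      LinearMap.proj (R := ℂ) (φ := fun _ => ℂ) w

/-- The standard basis vector of `V^{⊗k}` indexed by the word `w`. -/
def bv {k : ℕ} (w : Fin k → Bool) : TensorV k := fun w' => if w' = w then 1 else 0

/-- The word of `y ⊗ u_s ∈ V^{⊗(n+1)}`, where `u_s = u₁⊗⋯⊗u_n` has `u_i = x`
iff `i ∈ s`. -/
def wordOf {n : ℕ} (s : Finset (Fin n)) : Fin (n + 1) → Bool :=
  Fin.cons true (fun j => if j ∈ s then false else true)

/-- The highest weight vector `v_s = e · (y ⊗ u_s) ∈ V^{⊗(n+1)}`. -/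
def vStd {n : ℕ} (s : Finset (Fin n)) : TensorV (n + 1) := Eop (n + 1) (bv (wordOf s))

end

/-- The family `{v_s, f·v_s : s ⊆ {1,…,k-1}}` (with `k = n+1`). -/
noncomputable def tensorFam (n : ℕ) : Finset (Fin n) × Bool → TensorV (n + 1) :=
  fun p => if p.2 then Fop (n + 1) (vStd p.1) else vStd p.1

section AuxProof

open Finset

lemma Eop_apply {k : ℕ} (x : TensorV k) (w : Fin k → Bool) :
    Eop k x w = ∑ i ∈ univ.filter (fun i => w i = false),
      glSgn w i * x (Function.update w i true) := by
  simp [Eop, LinearMap.pi_apply, LinearMap.sum_apply, LinearMap.smul_apply, LinearMap.proj_apply,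
    smul_eq_mul]

lemma Fop_apply {k : ℕ} (x : TensorV k) (w : Fin k → Bool) :
    Fop k x w = ∑ i ∈ univ.filter (fun i => w i = true),
      glSgn w i * x (Function.update w i false) := by
  simp [Fop, LinearMap.pi_apply, LinearMap.sum_apply, LinearMap.smul_apply, LinearMap.proj_apply,
    smul_eq_mul]

lemma glSgn_eq_prod {k : ℕ} (w : Fin k → Bool) (i : Fin k) :
    glSgn w i = ∏ j, if j < i ∧ w j = true then (-1 : ℂ) else 1 := by
  rw [glSgn, Finset.prod_ite, Finset.prod_const, Finset.prod_const, one_pow, mul_one]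

lemma glSgn_sq {k : ℕ} (w : Fin k → Bool) (i : Fin k) :
    glSgn w i * glSgn w i = 1 := by
  rw [glSgn, ← pow_add, ← two_mul, pow_mul]
  norm_num

lemma glSgn_update_mul {k : ℕ} (w : Fin k → Bool) (a : Fin k) (b : Bool) (j : Fin k) :
    glSgn (Function.update w a b) j * glSgn w j =
      (if a < j ∧ b = true then (-1 : ℂ) else 1) * (if a < j ∧ w a = true then (-1 : ℂ) else 1) := by
  rw [glSgn_eq_prod, glSgn_eq_prod, ← Finset.prod_mul_distrib]
  rw [Finset.prod_eq_single a]
  · simp [Function.update_self]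
  · intro c _ hc
    rw [Function.update_of_ne hc]
    rcases em (c < j ∧ w c = true) with h | h <;> simp [h]
  · simp

lemma glSgn_update_eq {k : ℕ} (w : Fin k → Bool) (a : Fin k) (b : Bool) (j : Fin k) :
    glSgn (Function.update w a b) j =
      ((if a < j ∧ b = true then (-1 : ℂ) else 1) *
        (if a < j ∧ w a = true then (-1 : ℂ) else 1)) * glSgn w j := by
  calc glSgn (Function.update w a b) j
      = glSgn (Function.update w a b) j * (glSgn w j * glSgn w j) := by
        rw [glSgn_sq, mul_one]
    _ = (glSgn (Function.update w a b) j * glSgn w j) * glSgn w j := by ring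
    _ = _ := by rw [glSgn_update_mul]

lemma filter_update_insert {k : ℕ} (w : Fin k → Bool) (i : Fin k) (b : Bool) :
    univ.filter (fun j => Function.update w i b j = b) =
      insert i (univ.filter (fun j => w j = b)) := by
  ext c
  rcases eq_or_ne c i with rfl | hc
  · simp
  · simp [Function.update_of_ne hc, hc]

lemma filter_update_erase {k : ℕ} (w : Fin k → Bool) (i : Fin k) (b : Bool) :
    univ.filter (fun j => Function.update w i b j = !b) =
      (univ.filter (fun j => w j = !b)).erase i := by
  ext c
  rcases eq_or_ne c i with rfl | hc
  · simp
  · simp [Function.update_of_ne hc, hc]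

lemma sum_erase_antisymm {ι M : Type*} [DecidableEq ι] [AddCommGroup M] (s : Finset ι)
    (f : ι → ι → M) (h : ∀ i ∈ s, ∀ j ∈ s, i ≠ j → f i j + f j i = 0) :
    ∑ i ∈ s, ∑ j ∈ s.erase i, f i j = 0 := by
  have key : ∑ p ∈ (s ×ˢ s).filter (fun p => p.1 ≠ p.2), f p.1 p.2 = 0 := by
    apply Finset.sum_involution (g := fun p _ => p.swap)
    · intro p hp
      simp only [mem_filter, mem_product] at hp
      exact h p.1 hp.1.1 p.2 hp.1.2 hp.2
    · intro p hp hf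
      simp only [mem_filter, mem_product] at hp
      intro hs
      exact hp.2 (congrArg Prod.snd hs)
    · intro p hp
      simp
    · intro p hp
      simp only [mem_filter, mem_product] at hp ⊢
      exact ⟨⟨hp.1.2, hp.1.1⟩, Ne.symm hp.2⟩
  rw [← key, Finset.sum_filter, Finset.sum_product]
  refine Finset.sum_congr rfl fun i hi => ?_
  rw [← Finset.filter_ne' s i, Finset.sum_filter]
  refine Finset.sum_congr rfl fun j hj => ?_
  simp [ne_comm]

/-- antisymmetry of flip coefficients -/
lemma coeff_antisymm {k : ℕ} (w : Fin k → Bool) {i j : Fin k} (hij : i ≠ j) :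
    glSgn w i * glSgn (Function.update w i (!(w i))) j
      + glSgn w j * glSgn (Function.update w j (!(w j))) i = 0 := by
  rw [glSgn_update_eq, glSgn_update_eq]
  have h1 : (if i < j ∧ (!(w i)) = true then (-1 : ℂ) else 1) *
      (if i < j ∧ w i = true then (-1 : ℂ) else 1) = if i < j then -1 else 1 := by
    cases hwi : w i <;> by_cases h : i < j <;> simp [h, hwi]
  have h2 : (if j < i ∧ (!(w j)) = true then (-1 : ℂ) else 1) *
      (if j < i ∧ w j = true then (-1 : ℂ) else 1) = if j < i then -1 else 1 := by
    cases hwj : w j <;> by_cases h : j < i <;> simp [h, hwj]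
  rw [h1, h2]
  rcases lt_trichotomy i j with h | h | h
  · rw [if_pos h, if_neg (not_lt.2 h.le)]; ring
  · exact absurd h hij
  · rw [if_pos h, if_neg (not_lt.2 h.le)]; ring

lemma Eop_Eop {k : ℕ} (x : TensorV k) : Eop k (Eop k x) = 0 := by
  funext w
  rw [Eop_apply]
  have step : ∀ i ∈ Finset.univ.filter (fun i => w i = false),
      glSgn w i * Eop k x (Function.update w i true) =
        ∑ j ∈ (Finset.univ.filter (fun j => w j = false)).erase i,
          glSgn w i * (glSgn (Function.update w i true) j *
            x (Function.update (Function.update w i true) j true)) := by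
    intro i hi
    rw [Eop_apply, mul_sum]
    congr 1
    simpa using filter_update_erase w i true
  rw [Finset.sum_congr rfl step]
  show _ = (0 : TensorV k) w
  rw [Pi.zero_apply]
  apply sum_erase_antisymm
  intro i hi j hj hij
  simp only [mem_filter] at hi hj
  have hx : Function.update (Function.update w i true) j true =
      Function.update (Function.update w j true) i true := Function.update_comm hij _ _ _
  have hco : glSgn w i * glSgn (Function.update w i true) j
      + glSgn w j * glSgn (Function.update w j true) i = 0 := by
    simpa [hi.2, hj.2] using coeff_antisymm w hij
  rw [hx]
  linear_combination x (Function.update (Function.update w j true) i true) * hco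

lemma EF_pointwise {k : ℕ} (x : TensorV k) (w : Fin k → Bool) :
    Eop k (Fop k x) w =
      ((Finset.univ.filter (fun i => w i = false)).card : ℂ) * x w +
      ∑ i ∈ Finset.univ.filter (fun i => w i = false),
        ∑ j ∈ Finset.univ.filter (fun j => w j = true),
          glSgn w i * (glSgn (Function.update w i true) j *
            x (Function.update (Function.update w i true) j false)) := by
  rw [Eop_apply]
  have step : ∀ i ∈ Finset.univ.filter (fun i => w i = false),
      glSgn w i * Fop k x (Function.update w i true) =
        x w + ∑ j ∈ Finset.univ.filter (fun j => w j = true),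
          glSgn w i * (glSgn (Function.update w i true) j *
            x (Function.update (Function.update w i true) j false)) := by
    intro i hi
    have hwi : w i = false := (mem_filter.1 hi).2
    rw [Fop_apply, filter_update_insert w i true,
      Finset.sum_insert (by simp [hwi] : i ∉ Finset.univ.filter (fun j => w j = true))]
    have h1 : Function.update (Function.update w i true) i false = w := by
      rw [Function.update_idem, ← hwi, Function.update_eq_self]
    have h2 : glSgn (Function.update w i true) i = glSgn w i := by
      rw [glSgn_update_eq]
      simp [lt_irrefl]
    rw [h1, h2, mul_add, mul_sum, ← mul_assoc, glSgn_sq, one_mul]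
  rw [Finset.sum_congr rfl step, Finset.sum_add_distrib, Finset.sum_const, nsmul_eq_mul]

lemma FE_pointwise {k : ℕ} (x : TensorV k) (w : Fin k → Bool) :
    Fop k (Eop k x) w =
      ((Finset.univ.filter (fun i => w i = true)).card : ℂ) * x w +
      ∑ j ∈ Finset.univ.filter (fun j => w j = true),
        ∑ i ∈ Finset.univ.filter (fun i => w i = false),
          glSgn w j * (glSgn (Function.update w j false) i *
            x (Function.update (Function.update w j false) i true)) := by
  rw [Fop_apply]
  have step : ∀ j ∈ Finset.univ.filter (fun j => w j = true),
      glSgn w j * Eop k x (Function.update w j false) =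
        x w + ∑ i ∈ Finset.univ.filter (fun i => w i = false),
          glSgn w j * (glSgn (Function.update w j false) i *
            x (Function.update (Function.update w j false) i true)) := by
    intro j hj
    have hwj : w j = true := (mem_filter.1 hj).2
    rw [Eop_apply, filter_update_insert w j false,
      Finset.sum_insert (by simp [hwj] : j ∉ Finset.univ.filter (fun i => w i = false))]
    have h1 : Function.update (Function.update w j false) j true = w := by
      rw [Function.update_idem, ← hwj, Function.update_eq_self]
    have h2 : glSgn (Function.update w j false) j = glSgn w j := by
      rw [glSgn_update_eq]
      simp [lt_irrefl]
    rw [h1, h2, mul_add, mul_sum, ← mul_assoc, glSgn_sq, one_mul]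
  rw [Finset.sum_congr rfl step, Finset.sum_add_distrib, Finset.sum_const, nsmul_eq_mul]

lemma Eop_Fop_add {k : ℕ} (x : TensorV k) :
    Eop k (Fop k x) + Fop k (Eop k x) = (k : ℂ) • x := by
  funext w
  rw [Pi.add_apply, Pi.smul_apply, smul_eq_mul, EF_pointwise, FE_pointwise]
  have hcard : (Finset.univ.filter (fun i => w i = false)).card +
      (Finset.univ.filter (fun i => w i = true)).card = k := by
    have h := Finset.card_filter_add_card_filter_not
      (s := (Finset.univ : Finset (Fin k))) (p := fun i => w i = false)
    simpa using h
  have hcross : ∑ i ∈ Finset.univ.filter (fun i => w i = false),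
        ∑ j ∈ Finset.univ.filter (fun j => w j = true),
          glSgn w i * (glSgn (Function.update w i true) j *
            x (Function.update (Function.update w i true) j false)) +
      ∑ j ∈ Finset.univ.filter (fun j => w j = true),
        ∑ i ∈ Finset.univ.filter (fun i => w i = false),
          glSgn w j * (glSgn (Function.update w j false) i *
            x (Function.update (Function.update w j false) i true)) = 0 := by
    rw [Finset.sum_comm (s := Finset.univ.filter (fun j => w j = true))]
    rw [← Finset.sum_add_distrib]
    apply Finset.sum_eq_zero
    intro i hi
    rw [← Finset.sum_add_distrib]
    apply Finset.sum_eq_zero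
    intro j hj
    simp only [mem_filter] at hi hj
    have hij : i ≠ j := fun h => by rw [h, hj.2] at hi; exact absurd hi.2 (by simp)
    have hx : Function.update (Function.update w i true) j false =
        Function.update (Function.update w j false) i true := Function.update_comm hij _ _ _
    have hco : glSgn w i * glSgn (Function.update w i true) j
        + glSgn w j * glSgn (Function.update w j false) i = 0 := by
      simpa [hi.2, hj.2] using coeff_antisymm w hij
    rw [hx]
    linear_combination x (Function.update (Function.update w j false) i true) * hco
  push_cast [← hcard]
  linear_combination hcross

lemma wordOf_injective {n : ℕ} : Function.Injective (wordOf (n := n)) := by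
  intro s t h
  ext j
  have hj := congrFun h j.succ
  simp only [wordOf, Fin.cons_succ] at hj
  by_cases hs : j ∈ s <;> by_cases ht : j ∈ t <;> simp [hs, ht] at hj ⊢

lemma glSgn_zero {k : ℕ} (v : Fin (k + 1) → Bool) : glSgn v 0 = 1 := by
  rw [glSgn]
  have : (Finset.univ.filter (fun j => j < (0 : Fin (k+1)) ∧ v j = true)) = ∅ := by
    apply Finset.filter_eq_empty_iff.2
    intro j _
    simp [Fin.not_lt_zero]
  rw [this]
  simp

lemma supported_inj {n : ℕ} (u : TensorV (n + 1))
    (hsupp : ∀ w, w 0 = false → u w = 0) (hE : Eop (n + 1) u = 0) : u = 0 := by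
  funext w
  rw [Pi.zero_apply]
  cases hw : w 0 with
  | false => exact hsupp w hw
  | true =>
    have h0 := congrFun hE (Function.update w 0 false)
    rw [Eop_apply, Pi.zero_apply] at h0
    rw [Finset.sum_eq_single 0] at h0
    · have h1 : Function.update (Function.update w 0 false) 0 true = w := by
        rw [Function.update_idem, ← hw, Function.update_eq_self]
      rw [h1, glSgn_zero, one_mul] at h0
      exact h0
    · intro c hc hc0
      have : (Function.update (Function.update w 0 false) c true) 0 = false := by
        rw [Function.update_of_ne (Ne.symm hc0), Function.update_self]
      rw [hsupp _ this, mul_zero]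
    · intro h
      exact absurd (by simp) h

lemma eval_sum_bv {n : ℕ} (c : Finset (Fin n) → ℂ) (t : Finset (Fin n)) :
    (∑ s : Finset (Fin n), c s • bv (wordOf s)) (wordOf t) = c t := by
  rw [Finset.sum_apply]
  rw [Finset.sum_eq_single t]
  · simp [bv]
  · intro s _ hst
    have : wordOf t ≠ wordOf s := fun h => hst (wordOf_injective h).symm
    simp [bv, this]
  · simp

lemma supp_sum_bv {n : ℕ} (c : Finset (Fin n) → ℂ) (w : Fin (n + 1) → Bool)
    (hw : w 0 = false) : (∑ s : Finset (Fin n), c s • bv (wordOf s)) w = 0 := by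
  rw [Finset.sum_apply]
  apply Finset.sum_eq_zero
  intro s _
  have : w ≠ wordOf s := by
    intro h
    rw [h] at hw
    simp [wordOf] at hw
  simp [bv, this]


end AuxProof

/-- The vectors `{v_s, f·v_s : s ⊆ {1,…,k-1}}` form a basis of `V^{⊗k}` (`k = n+1`):
they are linearly independent and span; in particular the sum of the subspaces
`V_s = span{v_s, f·v_s}` over all `2^{k-1}` subsets is direct and is all of `V^{⊗k}`. -/
theorem tensorFam_is_basis (n : ℕ) :
    LinearIndependent ℂ (tensorFam n) ∧
    Submodule.span ℂ (Set.range (tensorFam n)) = ⊤ := by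
  have hind : LinearIndependent ℂ (tensorFam n) := by
    rw [Fintype.linearIndependent_iff]
    intro g hg
    have hsum : Eop (n + 1) (∑ s : Finset (Fin n), g (s, false) • bv (wordOf s)) +
        Fop (n + 1) (Eop (n + 1) (∑ s : Finset (Fin n), g (s, true) • bv (wordOf s))) = 0 := by
      rw [← hg, Fintype.sum_prod_type]
      simp only [Fintype.sum_bool, tensorFam, if_true, if_false, map_sum, map_smul, vStd]
      rw [Finset.sum_add_distrib]
      simp only [Bool.false_eq_true, if_false]
      abel
    have hEb : Eop (n + 1) (∑ s : Finset (Fin n), g (s, true) • bv (wordOf s)) = 0 := by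
      have h1 : Eop (n + 1) (Fop (n + 1)
          (Eop (n + 1) (∑ s : Finset (Fin n), g (s, true) • bv (wordOf s)))) = 0 := by
        have := congrArg (Eop (n + 1)) hsum
        rwa [map_add, map_zero, Eop_Eop, zero_add] at this
      have h2 := Eop_Fop_add (k := n + 1)
        (Eop (n + 1) (∑ s : Finset (Fin n), g (s, true) • bv (wordOf s)))
      rw [h1, Eop_Eop, map_zero, add_zero] at h2
      have hne : ((n : ℂ) + 1) ≠ 0 := by
        exact_mod_cast Nat.cast_add_one_ne_zero (R := ℂ) n
      have := h2.symm
      rw [Nat.cast_add, Nat.cast_one] at this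
      exact (smul_eq_zero.1 this).resolve_left hne
    have hEa : Eop (n + 1) (∑ s : Finset (Fin n), g (s, false) • bv (wordOf s)) = 0 := by
      rwa [hEb, map_zero, add_zero] at hsum
    have hb0 : (∑ s : Finset (Fin n), g (s, true) • bv (wordOf s)) = 0 :=
      supported_inj _ (supp_sum_bv _) hEb
    have ha0 : (∑ s : Finset (Fin n), g (s, false) • bv (wordOf s)) = 0 :=
      supported_inj _ (supp_sum_bv _) hEa
    rintro ⟨s, b⟩
    cases b with
    | false =>
      have := congrFun ha0 (wordOf s)
      rwa [eval_sum_bv (fun s => g (s, false)) s, Pi.zero_apply] at this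
    | true =>
      have := congrFun hb0 (wordOf s)
      rwa [eval_sum_bv (fun s => g (s, true)) s, Pi.zero_apply] at this
  refine ⟨hind, hind.span_eq_top_of_card_eq_finrank ?_⟩
  rw [Module.finrank_pi]
  simp [Fintype.card_finset, Fintype.card_fun, pow_succ]
end

section
/- For diagrams d in the planar rook monoid P_n, define X_d = Σ_{d′ ⊆ d} (−1)^{|d \ d′|} d′ in the monoid algebra ℂP_n, where d′ ranges over diagrams obtained from d by deleting edges (restricting the partial bijection to subsets of its domain) and |d \ d′| is the number of deleted edges. Then X_{d₁} X_{d₂} = δ_{β(d₁),τ(d₂)} X_{d₃}, where β(d) is the domain of d, τ(d) its image, and d₃ is the unique diagram with image τ(d₁) and domain β(d₂). In particular, the elements X_d are matrix units for ℂP_n. -/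
/-- The planar rook monoid `P_n`: order-preserving partial bijections of `Fin n`,
modeled as maps `Fin n → Option (Fin n)` that are injective and strictly
order-preserving on their domain. -/
def PRM (n : ℕ) : Type :=
  {f : Fin n → Option (Fin n) //
    (∀ i j a, f i = some a → f j = some a → i = j) ∧
    (∀ i j a b, f i = some a → f j = some b → i < j → a < b)}

instance (n : ℕ) : DecidableEq (PRM n) :=
  inferInstanceAs (DecidableEq {f : Fin n → Option (Fin n) // _})

/-- Composition of diagrams (concatenation) makes `P_n` a monoid. -/
instance (n : ℕ) : Monoid (PRM n) where
  one := ⟨fun x => some x, by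
    constructor
    · intro i j a h1 h2; simp_all
    · intro i j a b h1 h2 h3; simp_all⟩
  mul f g := ⟨fun x => (g.1 x).bind f.1, by
    constructor
    · intro i j a hi hj
      obtain ⟨b, hb, hfb⟩ := Option.bind_eq_some_iff.mp hi
      obtain ⟨c, hc, hfc⟩ := Option.bind_eq_some_iff.mp hj
      have hbc : b = c := f.2.1 b c a hfb hfc
      subst hbc
      exact g.2.1 i j b hb hc
    · intro i j a b hi hj hij
      obtain ⟨c, hc, hfc⟩ := Option.bind_eq_some_iff.mp hi
      obtain ⟨e, he, hfe⟩ := Option.bind_eq_some_iff.mp hj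
      exact f.2.2 c e a b hfc hfe (g.2.2 i j c e hc he hij)⟩
  mul_assoc a b c := by
    apply Subtype.ext
    funext x
    exact (Option.bind_assoc (c.1 x) b.1 a.1).symm
  one_mul a := by
    apply Subtype.ext
    funext x
    exact Option.bind_fun_some (a.1 x)
  mul_one a := by
    apply Subtype.ext
    funext x
    rfl

/-- The domain (bottom row) `β(d)` of a diagram. -/
def rookDom {n : ℕ} (d : PRM n) : Finset (Fin n) :=
  Finset.univ.filter (fun i => (d.1 i).isSome)

/-- The image (top row) `τ(d)` of a diagram. -/
def rookIm {n : ℕ} (d : PRM n) : Finset (Fin n) :=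
  Finset.univ.filter (fun j => ∃ i, d.1 i = some j)

/-- The sub-diagram `d' ⊆ d` obtained by restricting `d` to the subset `t` of its
domain (deleting the other edges). -/
def rookRestrict {n : ℕ} (d : PRM n) (t : Finset (Fin n)) : PRM n :=
  ⟨fun i => if i ∈ t then d.1 i else none, by
    obtain ⟨h1, h2⟩ := d.2
    constructor
    · intro i j a hi hj
      by_cases hit : i ∈ t <;> by_cases hjt : j ∈ t <;> simp [hit, hjt] at hi hj
      exact h1 i j a hi hj
    · intro i j a b hi hj hij
      by_cases hit : i ∈ t <;> by_cases hjt : j ∈ t <;> simp [hit, hjt] at hi hj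
      exact h2 i j a b hi hj hij⟩

/-- The element `X_d = ∑_{d' ⊆ d} (−1)^{|d \ d'|} d'` of the planar rook algebra
`ℂ P_n`, the sum over sub-diagrams `d'` of `d`, signed by the number of deleted
edges. -/
noncomputable def Xd {n : ℕ} (d : PRM n) : MonoidAlgebra ℂ (PRM n) :=
  ∑ t ∈ (rookDom d).powerset,
    ((-1 : ℂ) ^ ((rookDom d).card - t.card)) • MonoidAlgebra.single (rookRestrict d t) 1

/-!
Expanding `X_{d₁} X_{d₂}` over the restrictions `d₁|_s`, the product `d₁|_s · X_{d₂}` vanishes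
unless `τ(d₂) ⊆ s`: an edge of `d₂` landing outside `s` can be added or deleted without changing
the composite diagram, and doing so flips the sign. When `τ(d₂) ⊆ s` it is the alternating sum of
the restrictions of `d₁ d₂` to the subsets of `β(d₂)`, which is `X_{d₁ d₂}` once `β(d₁) = τ(d₂)`.
The remaining alternating sum over `τ(d₂) ⊆ s ⊆ β(d₁)` is `δ_{β(d₁), τ(d₂)}` by the same toggling.
Uniqueness of `d₃` is uniqueness of an order-preserving bijection between two finite chains.
-/

open Finset

namespace Finset

variable {α R M : Type*} [DecidableEq α] [Ring R] [AddCommGroup M] [Module R M]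

theorem sum_powerset_neg_one_pow_card_sub_smul_eq_zero {D : Finset α} {a : α} (ha : a ∈ D)
    {F : Finset α → M} (hF : ∀ t ⊆ D.erase a, F (insert a t) = F t) :
    ∑ t ∈ D.powerset, (-1 : R) ^ (#D - #t) • F t = 0 := by
  obtain ⟨D, haD, rfl⟩ : ∃ D', a ∉ D' ∧ D = insert a D' :=
    ⟨D.erase a, notMem_erase a D, (insert_erase ha).symm⟩
  rw [erase_insert haD] at hF
  rw [sum_powerset_insert haD, ← sum_add_distrib]
  refine sum_eq_zero fun t ht => ?_
  have htD : t ⊆ D := mem_powerset.mp ht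
  have hat : a ∉ t := fun h => haD (htD h)
  rw [hF t htD, card_insert_of_notMem haD, card_insert_of_notMem hat,
    Nat.add_sub_add_right, Nat.succ_sub (card_le_card htD), pow_succ, mul_neg_one, neg_smul,
    neg_add_cancel]

theorem sum_powerset_neg_one_pow_card_sub_smul_ite_subset (A B : Finset α) (y : M) :
    ∑ s ∈ A.powerset, (-1 : R) ^ (#A - #s) • (if B ⊆ s then y else 0) =
      if A = B then y else 0 := by
  by_cases hBA : B ⊆ A
  · by_cases hAB : A = B
    · subst hAB
      rw [sum_eq_single_of_mem A (mem_powerset_self A)]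
      · simp
      · intro s hs hsA
        rw [if_neg fun h => hsA (subset_antisymm (mem_powerset.mp hs) h), smul_zero]
    · obtain ⟨a, haA, haB⟩ := not_subset.mp fun h => hAB (subset_antisymm h hBA)
      rw [if_neg hAB]
      refine sum_powerset_neg_one_pow_card_sub_smul_eq_zero haA fun t _ => ?_
      simp only [subset_insert_iff_of_notMem haB]
  · rw [if_neg (by rintro rfl; exact hBA subset_rfl)]
    refine sum_eq_zero fun s hs => ?_
    rw [if_neg fun h => hBA (h.trans (mem_powerset.mp hs)), smul_zero]

end Finset

namespace PRM

variable {n : ℕ}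

theorem ext {d d' : PRM n} (h : ∀ x, d.1 x = d'.1 x) : d = d' :=
  Subtype.ext (funext h)

@[simp]
theorem mul_apply (d₁ d₂ : PRM n) (x : Fin n) : (d₁ * d₂).1 x = (d₂.1 x).bind d₁.1 := rfl

@[simp]
theorem rookRestrict_apply (d : PRM n) (t : Finset (Fin n)) (x : Fin n) :
    (rookRestrict d t).1 x = if x ∈ t then d.1 x else none := rfl

theorem mem_rookDom {d : PRM n} {x : Fin n} : x ∈ rookDom d ↔ ∃ y, d.1 x = some y := by
  simp [rookDom, Option.isSome_iff_exists]

theorem mem_rookIm {d : PRM n} {y : Fin n} : y ∈ rookIm d ↔ ∃ x, d.1 x = some y := by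
  simp [rookIm]

theorem rookDom_mul {d₁ d₂ : PRM n} (h : rookIm d₂ ⊆ rookDom d₁) :
    rookDom (d₁ * d₂) = rookDom d₂ := by
  ext x
  simp only [mem_rookDom, mul_apply, Option.bind_eq_some_iff]
  constructor
  · rintro ⟨z, y, hy, -⟩
    exact ⟨y, hy⟩
  · rintro ⟨y, hy⟩
    obtain ⟨z, hz⟩ := mem_rookDom.mp (h (mem_rookIm.mpr ⟨x, hy⟩))
    exact ⟨z, y, hy, hz⟩

theorem rookIm_mul {d₁ d₂ : PRM n} (h : rookDom d₁ ⊆ rookIm d₂) :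
    rookIm (d₁ * d₂) = rookIm d₁ := by
  ext z
  simp only [mem_rookIm, mul_apply, Option.bind_eq_some_iff]
  constructor
  · rintro ⟨x, y, -, hz⟩
    exact ⟨y, hz⟩
  · rintro ⟨y, hz⟩
    obtain ⟨x, hy⟩ := mem_rookIm.mp (h (mem_rookDom.mpr ⟨z, hz⟩))
    exact ⟨x, y, hy, hz⟩

theorem rookRestrict_mul_rookRestrict_of_rookIm_subset (d₁ d₂ : PRM n) {s : Finset (Fin n)}
    (hs : rookIm d₂ ⊆ s) (t : Finset (Fin n)) :
    rookRestrict d₁ s * rookRestrict d₂ t = rookRestrict (d₁ * d₂) t := by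
  refine ext fun x => ?_
  by_cases hx : x ∈ t
  · cases hy : d₂.1 x with
    | none => simp [hx, hy]
    | some y => simp [hx, hy, hs (mem_rookIm.mpr ⟨x, hy⟩)]
  · simp [hx]

theorem rookRestrict_mul_rookRestrict_insert (d₁ d₂ : PRM n) {s : Finset (Fin n)} {a y : Fin n}
    (ha : d₂.1 a = some y) (hy : y ∉ s) (t : Finset (Fin n)) :
    rookRestrict d₁ s * rookRestrict d₂ (insert a t) = rookRestrict d₁ s * rookRestrict d₂ t := by
  refine ext fun x => ?_
  by_cases hxa : x = a
  · subst hxa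
    by_cases hx : x ∈ t <;> simp [hx, ha, hy]
  · simp [hxa]

theorem strictMono_of_forall_apply_eq_some (e : PRM n) {S : Finset (Fin n)} {g : S → Fin n}
    (hg : ∀ x : S, e.1 x = some (g x)) : StrictMono g :=
  fun x x' hxx' => e.2.2 x x' _ _ (hg x) (hg x') hxx'

theorem range_eq_rookIm_of_forall_apply_eq_some (e : PRM n) {S : Finset (Fin n)} {g : S → Fin n}
    (hS : rookDom e = S) (hg : ∀ x : S, e.1 x = some (g x)) : Set.range g = rookIm e := by
  ext y
  simp only [Set.mem_range, mem_coe, mem_rookIm]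
  constructor
  · rintro ⟨x, rfl⟩
    exact ⟨x, hg x⟩
  · rintro ⟨x, hx⟩
    have hxS : x ∈ S := hS ▸ mem_rookDom.mpr ⟨y, hx⟩
    exact ⟨⟨x, hxS⟩, Option.some_injective _ ((hg _).symm.trans hx)⟩

theorem eq_of_rookDom_eq_of_rookIm_eq {d d' : PRM n} (hdom : rookDom d = rookDom d')
    (him : rookIm d = rookIm d') : d = d' := by
  choose f hf using fun x : rookDom d => mem_rookDom.mp x.2
  choose f' hf' using fun x : rookDom d => mem_rookDom.mp (hdom.subset x.2)
  have hff' : f = f' :=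
    ((d.strictMono_of_forall_apply_eq_some hf).range_inj
      (d'.strictMono_of_forall_apply_eq_some hf')).mp <| by
    rw [d.range_eq_rookIm_of_forall_apply_eq_some rfl hf,
      d'.range_eq_rookIm_of_forall_apply_eq_some hdom.symm hf', him]
  refine ext fun x => ?_
  by_cases hx : x ∈ rookDom d
  · rw [hf ⟨x, hx⟩, hf' ⟨x, hx⟩, hff']
  · have hx' : x ∉ rookDom d' := hdom ▸ hx
    simp only [mem_rookDom, not_exists] at hx hx'
    rw [Option.eq_none_iff_forall_ne_some.mpr hx, Option.eq_none_iff_forall_ne_some.mpr hx']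

end PRM

open PRM MonoidAlgebra

theorem single_rookRestrict_mul_Xd {n : ℕ} (d₁ d₂ : PRM n) (s : Finset (Fin n)) :
    single (rookRestrict d₁ s) (1 : ℂ) * Xd d₂ =
      if rookIm d₂ ⊆ s then
        ∑ t ∈ (rookDom d₂).powerset,
          (-1 : ℂ) ^ (#(rookDom d₂) - #t) • single (rookRestrict (d₁ * d₂) t) 1
      else 0 := by
  simp only [Xd, mul_sum, mul_smul_comm, single_mul_single, one_mul]
  split_ifs with hs
  · simp only [rookRestrict_mul_rookRestrict_of_rookIm_subset d₁ d₂ hs]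
  · obtain ⟨y, hy, hys⟩ := not_subset.mp hs
    obtain ⟨a, ha⟩ := mem_rookIm.mp hy
    exact sum_powerset_neg_one_pow_card_sub_smul_eq_zero (mem_rookDom.mpr ⟨y, ha⟩)
      fun t _ => by rw [rookRestrict_mul_rookRestrict_insert d₁ d₂ ha hys]

theorem Xd_mul_Xd {n : ℕ} (d₁ d₂ : PRM n) :
    Xd d₁ * Xd d₂ = if rookDom d₁ = rookIm d₂ then Xd (d₁ * d₂) else 0 := by
  conv_lhs => rw [Xd]
  simp only [sum_mul, smul_mul_assoc, single_rookRestrict_mul_Xd,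
    sum_powerset_neg_one_pow_card_sub_smul_ite_subset]
  split_ifs with h
  · rw [Xd, rookDom_mul h.symm.subset]
  · rfl

/-- `X_{d₁} X_{d₂} = δ_{β(d₁), τ(d₂)} X_{d₃}`, where `d₃` is the unique diagram with
domain `β(d₂)` and image `τ(d₁)`: the elements `X_d` are matrix units for `ℂ P_n`. -/
theorem Xd_matrix_units (n : ℕ) (d₁ d₂ : PRM n) :
    (rookDom d₁ ≠ rookIm d₂ → Xd d₁ * Xd d₂ = 0) ∧
    (rookDom d₁ = rookIm d₂ →
      ∃! d₃ : PRM n, rookDom d₃ = rookDom d₂ ∧ rookIm d₃ = rookIm d₁ ∧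
        Xd d₁ * Xd d₂ = Xd d₃) := by
  refine ⟨fun h => by rw [Xd_mul_Xd, if_neg h], fun h => ?_⟩
  have hdom : rookDom (d₁ * d₂) = rookDom d₂ := rookDom_mul h.symm.subset
  have him : rookIm (d₁ * d₂) = rookIm d₁ := rookIm_mul h.subset
  refine ⟨d₁ * d₂, ⟨hdom, him, by rw [Xd_mul_Xd, if_pos h]⟩, ?_⟩
  rintro d₃ ⟨hdom₃, him₃, -⟩
  exact eq_of_rookDom_eq_of_rookIm_eq (hdom₃.trans hdom.symm) (him₃.trans him.symm)
end
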